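/- arXiv:1703.01401 — 2 statements merged into one kernel-verified Lean document; each statement's English description precedes it below -/
import Mathlib

section
/- Let C be a chain complex over a field with a bounded filtration F, and let C' be another filtered complex. If a filtered chain map F: C → C' induces an isomorphism on the homology of the associated graded complexes, then F is a filtered chain homotopy equivalence. -/
/-!
The mapping cone of `φ`, filtered by `F' p × F p`, has acyclic associated graded pieces exactly
because `φ` is a quasi-isomorphism on them. Over a field, a complex with a bounded filtration and
acyclic graded pieces has a filtered contracting homotopy, built one filtration step at a time: a
section of `d` modulo `F (p - 1)` yields a homotopy contracting `F p / F (p - 1)`, which then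
corrects the homotopy already built on `F (p - 1)`. The block components of a filtered
contraction of the cone are a filtered homotopy inverse of `φ` and the two filtered homotopies.
-/

open Submodule

namespace LinearMap

variable {K U W : Type*} [DivisionRing K] [AddCommGroup U] [Module K U]
  [AddCommGroup W] [Module K W]

theorem exists_rightInverse_on_range (f : U →ₗ[K] W) :
    ∃ g : W →ₗ[K] U, ∀ w ∈ range f, f (g w) = w := by
  obtain ⟨g₀, hg₀⟩ :=
    f.rangeRestrict.exists_rightInverse_of_surjective f.range_rangeRestrict
  obtain ⟨g, hg⟩ := exists_extend g₀
  refine ⟨g, fun w hw => ?_⟩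
  have hgw : g w = g₀ ⟨w, hw⟩ := LinearMap.congr_fun hg ⟨w, hw⟩
  rw [hgw]
  exact congrArg Subtype.val (LinearMap.congr_fun hg₀ ⟨w, hw⟩)

end LinearMap

section Contraction

variable {K V : Type*} [DivisionRing K] [AddCommGroup V] [Module K V] {d : V →ₗ[K] V}

theorem exists_relative_section {A B : Submodule K V}
    (hac : ∀ x ∈ B, d x ∈ A → x ∈ A ⊔ B.map d) :
    ∃ t : V →ₗ[K] V, (∀ x, t x ∈ B) ∧ (∀ x ∈ A, t x = 0) ∧
      ∀ y ∈ B, d y ∈ A → y - d (t y) ∈ A := by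
  obtain ⟨g, hg⟩ := (A.mkQ ∘ₗ d ∘ₗ B.subtype).exists_rightInverse_on_range
  refine ⟨B.subtype ∘ₗ g ∘ₗ A.mkQ, fun x => (g _).2,
    fun x hx => by simp [(Quotient.mk_eq_zero A).2 hx], fun y hy hdy => ?_⟩
  obtain ⟨a, ha, _, ⟨b, hb, rfl⟩, rfl⟩ := mem_sup.1 (hac y hy hdy)
  have hab : A.mkQ (a + d b) = A.mkQ (d b) := by
    simp [(Quotient.mk_eq_zero A).2 ha]
  have hgb := hg (A.mkQ (d b)) ⟨⟨b, hb⟩, rfl⟩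
  rw [← Quotient.mk_eq_zero, ← mkQ_apply, map_sub, hab]
  simpa [sub_eq_zero, hab] using hgb.symm

theorem exists_relative_contraction (hd : d ∘ₗ d = 0) {A B : Submodule K V}
    (hdA : A.map d ≤ A) (hdB : B.map d ≤ B)
    (hac : ∀ x ∈ B, d x ∈ A → x ∈ A ⊔ B.map d) :
    ∃ σ : V →ₗ[K] V, (∀ x, σ x ∈ B) ∧ (∀ x ∈ A, σ x = 0) ∧
      ∀ x ∈ B, x - (d (σ x) + σ (d x)) ∈ A := by
  obtain ⟨t, htB, htA, ht⟩ := exists_relative_section hac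
  have hdd x : d (d x) = 0 := LinearMap.congr_fun hd x
  -- `d ∘ t` fixes relative cycles modulo `A`; apply this to the relative cycle `x - t (d x)`.
  refine ⟨t - t ∘ₗ t ∘ₗ d, fun x => sub_mem (htB x) (htB _), fun x hx => ?_,
    fun x hx => ?_⟩
  · simp [htA x hx, htA _ (hdA (mem_map_of_mem hx))]
  · have hcycle : d (x - t (d x)) ∈ A := by
      simpa using ht (d x) (hdB (mem_map_of_mem hx)) (by simp [hdd])
    convert ht (x - t (d x)) (sub_mem hx (htB _)) hcycle using 1
    simp only [LinearMap.sub_apply, LinearMap.comp_apply, map_sub, hdd, map_zero]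
    abel

theorem exists_filtered_contraction_on (hd : d ∘ₗ d = 0) {G : ℤ → Submodule K V}
    (hG : Monotone G) {a : ℤ} (hbot : G a = ⊥) (hdG : ∀ p, (G p).map d ≤ G p)
    (hac : ∀ p, ∀ x ∈ G p, d x ∈ G (p - 1) → x ∈ G (p - 1) ⊔ (G p).map d)
    {p : ℤ} (hp : a ≤ p) :
    ∃ s : V →ₗ[K] V, (∀ q, (G q).map s ≤ G q) ∧
      ∀ x ∈ G p, d (s x) + s (d x) = x := by
  induction p, hp using Int.leInduction with
  | base => exact ⟨0, by simp, fun x hx => by simp_all⟩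
  | succ p _ ih =>
    obtain ⟨s, hsG, hs⟩ := ih
    have hac' : ∀ x ∈ G (p + 1), d x ∈ G p → x ∈ G p ⊔ (G (p + 1)).map d := by
      simpa using hac (p + 1)
    obtain ⟨σ, hσB, hσA, hσ⟩ := exists_relative_contraction hd (hdG p) (hdG (p + 1)) hac'
    have hdd x : d (d x) = 0 := LinearMap.congr_fun hd x
    set e : V →ₗ[K] V := LinearMap.id - (d ∘ₗ σ + σ ∘ₗ d)
    have he x : e x = x - (d (σ x) + σ (d x)) := rfl
    have hde x : e (d x) = d (e x) := by simp [he, hdd]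
    refine ⟨σ + s ∘ₗ e, fun q => map_le_iff_le_comap.2 fun x hx => ?_, fun x hx => ?_⟩
    · rcases le_or_gt q p with hqp | hpq
      · have hσx : σ x = 0 := hσA x (hG hqp hx)
        have hσdx : σ (d x) = 0 := hσA _ (hG hqp (hdG q (mem_map_of_mem hx)))
        simpa [he, hσx, hσdx] using hsG q (mem_map_of_mem hx)
      · have hle : G (p + 1) ≤ G q := hG (Int.add_one_le_iff.2 hpq)
        refine add_mem (hle (hσB x)) (hsG q (mem_map_of_mem ?_))
        exact sub_mem hx (add_mem (hdG q (mem_map_of_mem (hle (hσB x)))) (hle (hσB _)))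
    · have hsx := hs (e x) (hσ x hx)
      simp only [LinearMap.add_apply, LinearMap.comp_apply, map_add, hde] at hsx ⊢
      rw [← add_add_add_comm, hsx, he]
      abel

theorem exists_filtered_contraction (hd : d ∘ₗ d = 0) {G : ℤ → Submodule K V}
    (hG : Monotone G) {a b : ℤ} (hbot : G a = ⊥) (htop : G b = ⊤)
    (hdG : ∀ p, (G p).map d ≤ G p)
    (hac : ∀ p, ∀ x ∈ G p, d x ∈ G (p - 1) → x ∈ G (p - 1) ⊔ (G p).map d) :
    ∃ s : V →ₗ[K] V, (∀ p, (G p).map s ≤ G p) ∧ ∀ x, d (s x) + s (d x) = x := by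
  obtain ⟨s, hsG, hs⟩ := exists_filtered_contraction_on hd hG hbot hdG hac (le_max_left a b)
  exact ⟨s, hsG, fun x => hs x (hG (le_max_right a b) (htop ▸ mem_top))⟩

end Contraction

section MappingCone

variable {R M M' : Type*} [Ring R] [AddCommGroup M] [Module R M] [AddCommGroup M'] [Module R M']
  {d : M →ₗ[R] M} {d' : M' →ₗ[R] M'} {φ : M →ₗ[R] M'}

variable (d d' φ) in
def mappingCone : M' × M →ₗ[R] M' × M :=
  (d' ∘ₗ LinearMap.fst R M' M + φ ∘ₗ LinearMap.snd R M' M).prod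
    (-(d ∘ₗ LinearMap.snd R M' M))

@[simp]
theorem mappingCone_apply (v : M' × M) : mappingCone d d' φ v = (d' v.1 + φ v.2, -d v.2) := rfl

theorem mappingCone_comp_self (hd : d ∘ₗ d = 0) (hd' : d' ∘ₗ d' = 0)
    (hφd : d' ∘ₗ φ = φ ∘ₗ d) : mappingCone d d' φ ∘ₗ mappingCone d d' φ = 0 := by
  have hdd x : d (d x) = 0 := LinearMap.congr_fun hd x
  have hdd' x : d' (d' x) = 0 := LinearMap.congr_fun hd' x
  have hdφ x : d' (φ x) = φ (d x) := LinearMap.congr_fun hφd x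
  exact LinearMap.ext fun v => Prod.ext (by simp [hdd', hdφ]) (by simp [hdd])

theorem map_mappingCone_prod_le {A : Submodule R M} {A' : Submodule R M'}
    (hdA : A.map d ≤ A) (hd'A' : A'.map d' ≤ A') (hφA : A.map φ ≤ A') :
    (A'.prod A).map (mappingCone d d' φ) ≤ A'.prod A := by
  rintro _ ⟨v, ⟨hv₁, hv₂⟩, rfl⟩
  exact ⟨add_mem (hd'A' (mem_map_of_mem hv₁)) (hφA (mem_map_of_mem hv₂)),
    neg_mem (hdA (mem_map_of_mem hv₂))⟩

theorem mem_sup_map_mappingCone (hφd : d' ∘ₗ φ = φ ∘ₗ d)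
    {A B : Submodule R M} {A' B' : Submodule R M'} (hφA : A.map φ ≤ A') (hφB : B.map φ ≤ B')
    (hsurj : ∀ y ∈ B', d' y ∈ A' → ∃ x ∈ B, d x ∈ A ∧ φ x - y ∈ A' ⊔ B'.map d')
    (hinj : ∀ x ∈ B, d x ∈ A → φ x ∈ A' ⊔ B'.map d' → x ∈ A ⊔ B.map d)
    {v : M' × M} (hv : v ∈ B'.prod B) (hdv : mappingCone d d' φ v ∈ A'.prod A) :
    v ∈ A'.prod A ⊔ (B'.prod B).map (mappingCone d d' φ) := by
  obtain ⟨y, x⟩ := v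
  obtain ⟨hy, hx⟩ := hv
  obtain ⟨hdy, hdx⟩ : d' y + φ x ∈ A' ∧ -d x ∈ A := hdv
  have hφx : φ x ∈ A' ⊔ B'.map d' :=
    mem_sup.2 ⟨_, hdy, -d' y, ⟨-y, neg_mem hy, map_neg d' y⟩, by abel⟩
  obtain ⟨a, ha, _, ⟨c, hc, rfl⟩, rfl⟩ :=
    mem_sup.1 (hinj x hx (by simpa using neg_mem hdx) hφx)
  have hcycle : d' (y + φ c) ∈ A' := by
    have h : d' (y + φ c) = (d' y + φ (a + d c)) - φ a := by
      rw [map_add, show d' (φ c) = φ (d c) from LinearMap.congr_fun hφd c, map_add]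
      abel
    exact h ▸ sub_mem hdy (hφA (mem_map_of_mem ha))
  obtain ⟨z, hz, hdz, hzy⟩ := hsurj _ (add_mem hy (hφB (mem_map_of_mem hc))) hcycle
  obtain ⟨a', ha', _, ⟨w, hw, rfl⟩, hsum⟩ := mem_sup.1 hzy
  refine mem_sup.2 ⟨(-a', a + d z), ⟨neg_mem ha', add_mem ha hdz⟩, _,
    mem_map_of_mem (show (-w, z - c) ∈ B'.prod B from ⟨neg_mem hw, sub_mem hz hc⟩), ?_⟩
  refine Prod.ext ?_ ?_
  · simp only [Prod.fst_add, mappingCone_apply, map_neg, map_sub]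
    linear_combination (norm := module) -hsum
  · simp only [Prod.snd_add, mappingCone_apply, map_sub]
    abel

theorem exists_homotopyEquiv_of_mappingCone_contraction {ι : Type*}
    (F : ι → Submodule R M) (F' : ι → Submodule R M') (S : M' × M →ₗ[R] M' × M)
    (hSF : ∀ p, ((F' p).prod (F p)).map S ≤ (F' p).prod (F p))
    (hS : ∀ v, mappingCone d d' φ (S v) + S (mappingCone d d' φ v) = v) :
    ∃ ψ : M' →ₗ[R] M,
      d ∘ₗ ψ = ψ ∘ₗ d' ∧ (∀ p, (F' p).map ψ ≤ F p) ∧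
      (∃ h : M →ₗ[R] M, (∀ p, (F p).map h ≤ F p) ∧
        ψ ∘ₗ φ - LinearMap.id = d ∘ₗ h + h ∘ₗ d) ∧
      (∃ h' : M' →ₗ[R] M', (∀ p, (F' p).map h' ≤ F' p) ∧
        φ ∘ₗ ψ - LinearMap.id = d' ∘ₗ h' + h' ∘ₗ d') := by
  have hSinl p {x'} (hx' : x' ∈ F' p) : S (x', 0) ∈ (F' p).prod (F p) :=
    hSF p (mem_map_of_mem (show (x', 0) ∈ (F' p).prod (F p) from ⟨hx', zero_mem _⟩))
  have hSinr p {x} (hx : x ∈ F p) : S (0, x) ∈ (F' p).prod (F p) :=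
    hSF p (mem_map_of_mem (show (0, x) ∈ (F' p).prod (F p) from ⟨zero_mem _, hx⟩))
  refine ⟨LinearMap.snd R M' M ∘ₗ S ∘ₗ LinearMap.inl R M' M, ?_, ?_,
    ⟨LinearMap.snd R M' M ∘ₗ S ∘ₗ LinearMap.inr R M' M, ?_, ?_⟩,
    ⟨-(LinearMap.fst R M' M ∘ₗ S ∘ₗ LinearMap.inl R M' M), ?_, ?_⟩⟩
  · ext x'
    have h := congrArg Prod.snd (hS (x', 0))
    simp only [mappingCone_apply, Prod.snd_add, map_zero, add_zero, neg_zero] at h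
    simp only [LinearMap.comp_apply, LinearMap.coe_inl, LinearMap.snd_apply]
    linear_combination (norm := module) -h
  · exact fun p => map_le_iff_le_comap.2 fun x' hx' => (hSinl p hx').2
  · exact fun p => map_le_iff_le_comap.2 fun x hx => (hSinr p hx).2
  · ext x
    have h := hS (0, x)
    rw [show mappingCone d d' φ (0, x) = (φ x, 0) - (0, d x) by simp, map_sub] at h
    replace h := congrArg Prod.snd h
    simp only [mappingCone_apply, Prod.snd_add, Prod.snd_sub] at h
    simp only [LinearMap.sub_apply, LinearMap.add_apply, LinearMap.comp_apply,
      LinearMap.coe_inl, LinearMap.coe_inr, LinearMap.snd_apply, LinearMap.id_apply]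
    linear_combination (norm := module) h
  · exact fun p => map_le_iff_le_comap.2 fun x' hx' => neg_mem (hSinl p hx').1
  · ext x'
    have h := congrArg Prod.fst (hS (x', 0))
    simp only [mappingCone_apply, map_zero, add_zero, neg_zero, Prod.fst_add] at h
    simp only [LinearMap.sub_apply, LinearMap.add_apply, LinearMap.comp_apply, LinearMap.neg_apply,
      LinearMap.comp_neg, LinearMap.neg_comp, LinearMap.coe_inl, LinearMap.fst_apply,
      LinearMap.snd_apply, LinearMap.id_apply]
    linear_combination (norm := module) h

end MappingCone

/-- Let `(M, d)` and `(M', d')` be chain complexes of vector spaces over a field `K`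
(encoded as modules with square-zero endomorphisms), each equipped with a bounded
increasing filtration by subcomplexes.  Let `φ` be a filtered chain map.  If `φ` induces
an isomorphism on the homology of the associated graded complexes (expressed elementwise:
the induced map on each graded homology `H(F_p/F_{p−1})` is injective and surjective),
then `φ` is a filtered chain homotopy equivalence: there are a filtered chain map `ψ`
in the opposite direction and filtered homotopies `h, h'` with
`ψφ − id = dh + hd` and `φψ − id = d'h' + h'd'`. -/
theorem filtered_quasi_iso_on_graded_is_filtered_homotopy_equivalence
    {K M M' : Type*} [Field K]
    [AddCommGroup M] [Module K M] [AddCommGroup M'] [Module K M']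
    (d : M →ₗ[K] M) (d' : M' →ₗ[K] M')
    (hd : d ∘ₗ d = 0) (hd' : d' ∘ₗ d' = 0)
    (F : ℤ → Submodule K M) (F' : ℤ → Submodule K M')
    (hmono : Monotone F) (hmono' : Monotone F')
    (N : ℤ)
    (hbot : ∀ p, p ≤ -N → F p = ⊥) (htop : ∀ p, N ≤ p → F p = ⊤)
    (hbot' : ∀ p, p ≤ -N → F' p = ⊥) (htop' : ∀ p, N ≤ p → F' p = ⊤)
    (hdF : ∀ p, (F p).map d ≤ F p) (hdF' : ∀ p, (F' p).map d' ≤ F' p)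
    (φ : M →ₗ[K] M')
    (hφd : d' ∘ₗ φ = φ ∘ₗ d) (hφF : ∀ p, (F p).map φ ≤ F' p)
    -- φ is surjective on the homology of the associated graded complexes:
    (hsurj : ∀ p, ∀ y ∈ F' p, d' y ∈ F' (p - 1) →
      ∃ x ∈ F p, d x ∈ F (p - 1) ∧ φ x - y ∈ F' (p - 1) ⊔ (F' p).map d')
    -- φ is injective on the homology of the associated graded complexes:
    (hinj : ∀ p, ∀ x ∈ F p, d x ∈ F (p - 1) →
      φ x ∈ F' (p - 1) ⊔ (F' p).map d' → x ∈ F (p - 1) ⊔ (F p).map d) :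
    ∃ ψ : M' →ₗ[K] M,
      d ∘ₗ ψ = ψ ∘ₗ d' ∧ (∀ p, (F' p).map ψ ≤ F p) ∧
      (∃ h : M →ₗ[K] M, (∀ p, (F p).map h ≤ F p) ∧
        ψ ∘ₗ φ - LinearMap.id = d ∘ₗ h + h ∘ₗ d) ∧
      (∃ h' : M' →ₗ[K] M', (∀ p, (F' p).map h' ≤ F' p) ∧
        φ ∘ₗ ψ - LinearMap.id = d' ∘ₗ h' + h' ∘ₗ d') := by
  obtain ⟨S, hSF, hS⟩ := exists_filtered_contraction (mappingCone_comp_self hd hd' hφd)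
    (G := fun p => (F' p).prod (F p)) (fun p q hpq => prod_mono (hmono' hpq) (hmono hpq))
    (a := -N) (b := N) (by simp [hbot, hbot']) (by simp [htop, htop'])
    (fun p => map_mappingCone_prod_le (hdF p) (hdF' p) (hφF p))
    (fun p _ hv hdv =>
      mem_sup_map_mappingCone hφd (hφF (p - 1)) (hφF p) (hsurj p) (hinj p) hv hdv)
  exact exists_homotopyEquiv_of_mappingCone_contraction F F' S hSF hS
end

section
/- Suppose (C, d_1 + d_2 + ... + d_k) is a finite-dimensional filtered chain complex over a field, graded by an auxiliary grading so that d_i raises the grading by i, and C is concentrated in three adjacent gradings with pieces C_1, C_2, C_3 satisfying dim(C_2) = dim(C_1) + dim(C_3). If the homology of the total complex is trivial, then the homology H(C, d_1) with respect to d_1 alone is also trivial. -/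
/-- Let `(C, d₁ + d₂)` be a finite-dimensional chain complex over a field, concentrated in
three adjacent auxiliary gradings `C = V₁ ⊕ V₂ ⊕ V₃` with
`dim V₂ = dim V₁ + dim V₃`, where `dᵢ` raises the auxiliary grading by `i` (so `d₁` is
given by maps `f : V₁ → V₂`, `g : V₂ → V₃`, and `d₂` by `h : V₁ → V₃`).  If the homology
of the total complex is trivial, then the homology with respect to `d₁` alone is also
trivial. -/
theorem three_gradings_dimension_count_trivial_homology
    {K V₁ V₂ V₃ : Type*} [Field K]
    [AddCommGroup V₁] [Module K V₁] [AddCommGroup V₂] [Module K V₂]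
    [AddCommGroup V₃] [Module K V₃]
    [FiniteDimensional K V₁] [FiniteDimensional K V₂] [FiniteDimensional K V₃]
    (hdim : Module.finrank K V₂ = Module.finrank K V₁ + Module.finrank K V₃)
    (f : V₁ →ₗ[K] V₂) (g : V₂ →ₗ[K] V₃) (h : V₁ →ₗ[K] V₃) :
    let p₁ := LinearMap.fst K V₁ (V₂ × V₃)
    let p₂ := (LinearMap.fst K V₂ V₃) ∘ₗ (LinearMap.snd K V₁ (V₂ × V₃))
    let d₁ : (V₁ × V₂ × V₃) →ₗ[K] (V₁ × V₂ × V₃) :=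
      LinearMap.prod 0 (LinearMap.prod (f ∘ₗ p₁) (g ∘ₗ p₂))
    let d₂ : (V₁ × V₂ × V₃) →ₗ[K] (V₁ × V₂ × V₃) :=
      LinearMap.prod 0 (LinearMap.prod 0 (h ∘ₗ p₁))
    (d₁ + d₂) ∘ₗ (d₁ + d₂) = 0 →
    LinearMap.ker (d₁ + d₂) ≤ LinearMap.range (d₁ + d₂) →
    LinearMap.ker d₁ ≤ LinearMap.range d₁ := by
  intro p₁ p₂ d₁ d₂ hsq hex
  set n₁ := Module.finrank K V₁ with hn₁
  set n₂ := Module.finrank K V₂ with hn₂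
  set n₃ := Module.finrank K V₃ with hn₃
  set D := d₁ + d₂ with hD
  -- explicit formula for D
  have hDapp : ∀ v : V₁ × V₂ × V₃, D v = (0, f v.1, g v.2.1 + h v.1) := by
    intro v
    simp [hD, d₁, d₂, p₁, p₂, Prod.add_def]
  -- g ∘ f = 0
  have hgf : ∀ x : V₁, g (f x) = 0 := by
    intro x
    have := LinearMap.ext_iff.mp hsq (x, 0, 0)
    rw [LinearMap.comp_apply] at this
    rw [hDapp, hDapp] at this
    simpa using congrArg (fun w : V₁ × V₂ × V₃ => w.2.2) this
  -- range D ≤ ker D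
  have hrk : LinearMap.range D ≤ LinearMap.ker D :=
    LinearMap.range_le_ker_iff.mpr hsq
  have hkr : LinearMap.ker D = LinearMap.range D := le_antisymm hex hrk
  -- dim ker D = n₂
  have htot : Module.finrank K (V₁ × V₂ × V₃) = n₁ + n₂ + n₃ := by
    rw [Module.finrank_prod, Module.finrank_prod]; ring
  have hrn := LinearMap.finrank_range_add_finrank_ker D
  rw [← hkr, htot] at hrn
  have hkD : Module.finrank K (LinearMap.ker D) = n₂ := by omega
  -- the injection (ker g) × V₃ → ker D, (y, z) ↦ (0, y, z)
  have hθker : ∀ w : ↥(LinearMap.ker g) × V₃,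
      ((0, (w.1 : V₂), w.2) : V₁ × V₂ × V₃) ∈ LinearMap.ker D := by
    intro w
    rw [LinearMap.mem_ker, hDapp]
    simp [w.1.2]
  let θ : (↥(LinearMap.ker g) × V₃) →ₗ[K] (V₁ × V₂ × V₃) :=
    LinearMap.prod 0 (LinearMap.prod
      ((LinearMap.ker g).subtype ∘ₗ LinearMap.fst K ↥(LinearMap.ker g) V₃)
      (LinearMap.snd K ↥(LinearMap.ker g) V₃))
  have hθapp : ∀ w : ↥(LinearMap.ker g) × V₃, θ w = (0, (w.1 : V₂), w.2) := by
    intro w; rfl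
  let Ψ : (↥(LinearMap.ker g) × V₃) →ₗ[K] ↥(LinearMap.ker D) :=
    LinearMap.codRestrict (LinearMap.ker D) θ (fun w => by rw [hθapp]; exact hθker w)
  have hΨinj : Function.Injective Ψ := by
    intro w w' hww
    have h2 : θ w = θ w' := congrArg Subtype.val hww
    rw [hθapp, hθapp] at h2
    ext
    · exact congrArg (fun v : V₁ × V₂ × V₃ => v.2.1) h2
    · exact congrArg (fun v : V₁ × V₂ × V₃ => v.2.2) h2
  -- the projection ker D → V₁
  let π : ↥(LinearMap.ker D) →ₗ[K] V₁ :=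
    (LinearMap.fst K V₁ (V₂ × V₃)) ∘ₗ (LinearMap.ker D).subtype
  have hΨπ : LinearMap.range Ψ ≤ LinearMap.ker π := by
    rintro v ⟨w, rfl⟩
    show π (Ψ w) = 0
    rfl
  -- dimension count
  have hrnπ := LinearMap.finrank_range_add_finrank_ker π
  rw [hkD] at hrnπ
  have hΨrange : Module.finrank K (LinearMap.range Ψ)
      = Module.finrank K (LinearMap.ker g) + n₃ := by
    rw [LinearMap.finrank_range_of_inj hΨinj, Module.finrank_prod]
  have hkerπ : Module.finrank K (LinearMap.ker g) + n₃
      ≤ Module.finrank K (LinearMap.ker π) := by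
    rw [← hΨrange]; exact Submodule.finrank_mono hΨπ
  have hrng := LinearMap.finrank_range_add_finrank_ker g
  have hrg_le : Module.finrank K (LinearMap.range g) ≤ n₃ :=
    (LinearMap.range g).finrank_le
  -- conclude: g surjective, π has trivial range
  have hrg : Module.finrank K (LinearMap.range g) = n₃ := by omega
  have hπ0 : Module.finrank K (LinearMap.range π) = 0 := by omega
  have hgsurj : LinearMap.range g = ⊤ := by
    apply Submodule.eq_top_of_finrank_eq; rw [hrg]
  have hπbot : LinearMap.range π = ⊥ := Submodule.finrank_eq_zero.mp hπ0
  -- f is injective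
  have hfinj : LinearMap.ker f = ⊥ := by
    rw [eq_bot_iff]
    intro x hx
    rw [LinearMap.mem_ker] at hx
    obtain ⟨y, hy⟩ := (LinearMap.range_eq_top.mp hgsurj) (-h x)
    have hmem : ((x, y, 0) : V₁ × V₂ × V₃) ∈ LinearMap.ker D := by
      rw [LinearMap.mem_ker, hDapp]
      simp [hx, hy]
    have : x ∈ LinearMap.range π := ⟨⟨(x, y, 0), hmem⟩, rfl⟩
    rw [hπbot] at this
    exact this
  -- ker g = range f
  have hrf : Module.finrank K (LinearMap.range f) = n₁ :=
    LinearMap.finrank_range_of_inj (LinearMap.ker_eq_bot.mp hfinj)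
  have hfg_le : LinearMap.range f ≤ LinearMap.ker g := by
    rintro y ⟨x, rfl⟩
    exact hgf x
  have hkerg_eq : LinearMap.ker g = LinearMap.range f := by
    symm
    apply Submodule.eq_of_le_of_finrank_le hfg_le
    rw [hrf]; omega
  -- finish: exactness of d₁
  intro v hv
  rw [LinearMap.mem_ker] at hv
  have hv1 : f v.1 = 0 := congrArg (fun w : V₁ × V₂ × V₃ => w.2.1) hv
  have hv2 : g v.2.1 = 0 := congrArg (fun w : V₁ × V₂ × V₃ => w.2.2) hv
  have hv1' : v.1 = 0 := by
    have : v.1 ∈ LinearMap.ker f := hv1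
    rw [hfinj] at this; exact this
  obtain ⟨a, ha⟩ : v.2.1 ∈ LinearMap.range f := by rw [← hkerg_eq]; exact hv2
  obtain ⟨b, hb⟩ := (LinearMap.range_eq_top.mp hgsurj) v.2.2
  refine ⟨(a, b, 0), ?_⟩
  have : d₁ (a, b, 0) = (0, f a, g b) := by simp [d₁, p₁, p₂]
  rw [this, ha, hb, ← hv1']
end
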